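/- arXiv:1805.07825 — 3 statements merged into one kernel-verified Lean document; each statement's English description precedes it below -/
import Mathlib

section
/- Combining the two directions: for a real symmetric n×n matrix L with L·𝟙 = 0 and L positive semidefinite, λ₂(L) equals the supremum of all γ ∈ ℝ such that L ⪰ γ·(Iₙ - e₀⊗e₀). -/
/-!
Write `P = 1 - e₀ e₀ᵀ`. Since `L` is symmetric with `L e₀ = 0`, the quadratic form of `L - γ P`
at `x = y + c e₀` with `y ⊥ e₀` is `yᵀ L y - γ ‖y‖²`. So `L ⪰ γ P` iff `γ ≤ uᵀ L u` for every
unit vector `u ⊥ e₀`: the admissible `γ` are exactly the lower bounds of the set of Rayleigh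
quotients whose infimum defines `λ₂`, and the supremum of the lower bounds is that infimum.
-/

open Matrix BigOperators

/-- The second smallest eigenvalue (algebraic connectivity) of a graph Laplacian,
via its variational characterization. -/
noncomputable def lambda2 {n : ℕ} (L : Matrix (Fin n) (Fin n) ℝ) : ℝ :=
  sInf {r : ℝ | ∃ v : Fin n → ℝ, (∑ i, (v i)^2) = 1 ∧ (∑ i, v i) = 0 ∧
    r = v ⬝ᵥ (L *ᵥ v)}

/-- The normalized all-ones vector `e₀ = 𝟙/√n`. -/
noncomputable def e0 (n : ℕ) : Fin n → ℝ := fun _ => 1 / Real.sqrt n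

-- Both sides are `0` when `s = ∅`, by the conventions `sSup univ = sInf ∅ = 0` on `ℝ`.
lemma Real.sSup_lowerBounds_eq_sInf {s : Set ℝ} (hs : BddBelow s) :
    sSup (lowerBounds s) = sInf s := by
  rcases s.eq_empty_or_nonempty with rfl | hne
  · simp [Real.sInf_empty]
  · exact csSup_lowerBounds_eq_csInf hs hne

section OrthogonalComplement

variable {ι : Type*}

lemma isSymm_one_sub_vecMulVec [DecidableEq ι] (e : ι → ℝ) : (1 - vecMulVec e e).IsSymm :=
  isSymm_one.sub (by simp [IsSymm, transpose_vecMulVec])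

variable [Fintype ι]

lemma dotProduct_self_eq_sum_sq (x : ι → ℝ) : x ⬝ᵥ x = ∑ i, x i ^ 2 := by
  simp [dotProduct, sq]

lemma dotProduct_one_sub_vecMulVec_mulVec [DecidableEq ι] (e x : ι → ℝ) :
    x ⬝ᵥ ((1 - vecMulVec e e) *ᵥ x) = x ⬝ᵥ x - (e ⬝ᵥ x) ^ 2 := by
  simp [sub_mulVec, vecMulVec_mulVec, dotProduct_comm x e, sq]

lemma dotProduct_mulVec_add_smul_of_mulVec_eq_zero {L : Matrix ι ι ℝ} (hL : L.IsSymm)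
    {e : ι → ℝ} (he : L *ᵥ e = 0) (y : ι → ℝ) (c : ℝ) :
    (y + c • e) ⬝ᵥ (L *ᵥ (y + c • e)) = y ⬝ᵥ (L *ᵥ y) := by
  have hLe : e ⬝ᵥ (L *ᵥ y) = 0 := by
    rw [dotProduct_mulVec, ← mulVec_transpose, hL.eq, he, zero_dotProduct]
  simp [mulVec_add, mulVec_smul, he, add_dotProduct, hLe]

lemma mul_dotProduct_self_le_of_forall_unit {L : Matrix ι ι ℝ} {e : ι → ℝ} {γ : ℝ}
    (h : ∀ u, u ⬝ᵥ u = 1 → e ⬝ᵥ u = 0 → γ ≤ u ⬝ᵥ (L *ᵥ u)) {y : ι → ℝ} (hy : e ⬝ᵥ y = 0) :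
    γ * (y ⬝ᵥ y) ≤ y ⬝ᵥ (L *ᵥ y) := by
  rcases eq_or_ne y 0 with rfl | hy0
  · simp
  have hpos : 0 < y ⬝ᵥ y := dotProduct_self_star_pos_iff.mpr hy0
  set t := Real.sqrt (y ⬝ᵥ y)
  have ht : t ^ 2 = y ⬝ᵥ y := Real.sq_sqrt hpos.le
  have ht0 : t ≠ 0 := (Real.sqrt_pos.mpr hpos).ne'
  have hunit : t⁻¹ • y ⬝ᵥ t⁻¹ • y = 1 := by
    simp only [dotProduct_smul, smul_dotProduct, ← ht, smul_eq_mul]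
    field_simp
  have hu := h (t⁻¹ • y) hunit (by simp [hy])
  simp only [mulVec_smul, dotProduct_smul, smul_dotProduct, smul_eq_mul] at hu
  calc γ * (y ⬝ᵥ y) ≤ t⁻¹ * (t⁻¹ * y ⬝ᵥ (L *ᵥ y)) * t ^ 2 := by rw [ht]; gcongr
    _ = y ⬝ᵥ (L *ᵥ y) := by field_simp

variable [DecidableEq ι]

lemma dotProduct_sub_smul_one_sub_vecMulVec_mulVec {L : Matrix ι ι ℝ} (hL : L.IsSymm)
    {e : ι → ℝ} (he : L *ᵥ e = 0) (he1 : e ⬝ᵥ e = 1) (γ c : ℝ) {y : ι → ℝ} (hy : e ⬝ᵥ y = 0) :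
    (y + c • e) ⬝ᵥ ((L - γ • (1 - vecMulVec e e)) *ᵥ (y + c • e)) =
      y ⬝ᵥ (L *ᵥ y) - γ * (y ⬝ᵥ y) := by
  have hnorm : (y + c • e) ⬝ᵥ (y + c • e) - (e ⬝ᵥ (y + c • e)) ^ 2 = y ⬝ᵥ y := by
    simp [add_dotProduct, dotProduct_add, dotProduct_comm y e, hy, he1]
    ring
  rw [sub_mulVec, smul_mulVec, dotProduct_sub, dotProduct_smul,
    dotProduct_mulVec_add_smul_of_mulVec_eq_zero hL he, dotProduct_one_sub_vecMulVec_mulVec,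
    hnorm, smul_eq_mul]

theorem posSemidef_sub_smul_one_sub_vecMulVec_iff {L : Matrix ι ι ℝ} (hL : L.IsSymm)
    {e : ι → ℝ} (he : L *ᵥ e = 0) (he1 : e ⬝ᵥ e = 1) (γ : ℝ) :
    (L - γ • (1 - vecMulVec e e)).PosSemidef ↔
      ∀ u, u ⬝ᵥ u = 1 → e ⬝ᵥ u = 0 → γ ≤ u ⬝ᵥ (L *ᵥ u) := by
  constructor
  · intro hM u hu he_u
    have := hM.dotProduct_mulVec_nonneg (u + (0 : ℝ) • e)
    rw [star_trivial, dotProduct_sub_smul_one_sub_vecMulVec_mulVec hL he he1 γ 0 he_u, hu]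
      at this
    linarith
  · intro h
    refine .of_dotProduct_mulVec_nonneg ?_ fun x => ?_
    · exact isHermitian_iff_isSymm.mpr (hL.sub ((isSymm_one_sub_vecMulVec e).smul γ))
    have hy : e ⬝ᵥ (x - (e ⬝ᵥ x) • e) = 0 := by simp [dotProduct_sub, he1]
    rw [star_trivial, ← sub_add_cancel x ((e ⬝ᵥ x) • e),
      dotProduct_sub_smul_one_sub_vecMulVec_mulVec hL he he1 γ _ hy, sub_nonneg]
    exact mul_dotProduct_self_le_of_forall_unit h hy

theorem sSup_posSemidef_sub_smul_one_sub_vecMulVec {L : Matrix ι ι ℝ} (hL : L.PosSemidef)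
    {e : ι → ℝ} (he : L *ᵥ e = 0) (he1 : e ⬝ᵥ e = 1) :
    sSup {γ : ℝ | (L - γ • (1 - vecMulVec e e)).PosSemidef} =
      sInf {r : ℝ | ∃ u, u ⬝ᵥ u = 1 ∧ e ⬝ᵥ u = 0 ∧ r = u ⬝ᵥ (L *ᵥ u)} := by
  have hLs : L.IsSymm := isHermitian_iff_isSymm.mp hL.isHermitian
  have hT : {γ : ℝ | (L - γ • (1 - vecMulVec e e)).PosSemidef} =
      lowerBounds {r : ℝ | ∃ u, u ⬝ᵥ u = 1 ∧ e ⬝ᵥ u = 0 ∧ r = u ⬝ᵥ (L *ᵥ u)} := by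
    ext γ
    simp only [Set.mem_ofPred_eq, posSemidef_sub_smul_one_sub_vecMulVec_iff hLs he he1,
      mem_lowerBounds, forall_exists_index, and_imp]
    exact ⟨fun h _ u hu heu hr => hr ▸ h u hu heu, fun h u hu heu => h _ u hu heu rfl⟩
  rw [hT, Real.sSup_lowerBounds_eq_sInf]
  refine ⟨0, ?_⟩
  rintro _ ⟨u, -, -, rfl⟩
  simpa using hL.dotProduct_mulVec_nonneg u

end OrthogonalComplement

lemma e0_dotProduct {n : ℕ} (x : Fin n → ℝ) : e0 n ⬝ᵥ x = (∑ i, x i) / Real.sqrt n := by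
  simp [e0, dotProduct, Finset.mul_sum, div_eq_inv_mul]

lemma e0_dotProduct_self {n : ℕ} (hn : 0 < n) : e0 n ⬝ᵥ e0 n = 1 := by
  have hn' : (0 : ℝ) < n := by exact_mod_cast hn
  simp only [e0_dotProduct, e0, one_div, Finset.sum_const, Finset.card_univ, Fintype.card_fin,
    nsmul_eq_mul]
  field_simp
  simp [Real.sq_sqrt hn'.le]

theorem stmt2_general {n : ℕ} (hn : 0 < n) (L : Matrix (Fin n) (Fin n) ℝ)
    (hpsd : L.PosSemidef)
    (hker : L *ᵥ (fun _ => (1 : ℝ)) = 0) :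
    lambda2 L = sSup {γ : ℝ |
      (L - γ • ((1 : Matrix (Fin n) (Fin n) ℝ) - vecMulVec (e0 n) (e0 n))).PosSemidef} := by
  have he0 : L *ᵥ e0 n = 0 := by
    rw [show e0 n = (1 / Real.sqrt n) • fun _ => (1 : ℝ) by ext; simp [e0], mulVec_smul, hker,
      smul_zero]
  rw [sSup_posSemidef_sub_smul_one_sub_vecMulVec hpsd he0 (e0_dotProduct_self hn), lambda2]
  have hsn : Real.sqrt n ≠ 0 := by positivity
  simp [dotProduct_self_eq_sum_sq, e0_dotProduct, hsn]

theorem stmt2 {n : ℕ} (hn : 0 < n) (L : Matrix (Fin n) (Fin n) ℝ)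
    (hsymm : L.IsSymm) (hpsd : L.PosSemidef)
    (hker : L *ᵥ (fun _ => (1 : ℝ)) = 0) :
    lambda2 L = sSup {γ : ℝ |
      (L - γ • ((1 : Matrix (Fin n) (Fin n) ℝ) - vecMulVec (e0 n) (e0 n))).PosSemidef} :=
  stmt2_general hn L hpsd hker
end

section
/- Let Γ be a finite set of 0/1 edge-selection vectors, and for each x ∈ Γ let v_x be a Fiedler vector of L(x) (a unit eigenvector for λ₂(L(x)) orthogonal to 𝟙). Consider the relaxed problem maximizing γ subject to v_y · L(x) v_y ≥ γ for all y ∈ Γ, over x ∈ Γ. Then the optimal value of this relaxed problem equals max_{x∈Γ} λ₂(L(x)). -/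
open Matrix BigOperators

/-- The local (edge) Laplacian `w_e (e_i - e_j) ⊗ (e_i - e_j)` of an edge `{i,j}`. -/
noncomputable def edgeLap {n : ℕ} (w : ℝ) (i j : Fin n) : Matrix (Fin n) (Fin n) ℝ :=
  w • vecMulVec (Pi.single i 1 - Pi.single j 1) (Pi.single i 1 - Pi.single j 1)

/-- The weighted Laplacian of the subgraph selected by the edge variables `x`. -/
noncomputable def Lap {n : ℕ} (E : Finset (Fin n × Fin n)) (w : Fin n × Fin n → ℝ)
    (x : Fin n × Fin n → ℝ) : Matrix (Fin n) (Fin n) ℝ :=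
  ∑ e ∈ E, x e • edgeLap (w e) e.1 e.2

theorem abs_le_one_of_sum_sq_eq_one {ι R : Type*} [Fintype ι] [Ring R] [LinearOrder R]
    [IsStrictOrderedRing R] {v : ι → R} (hv : ∑ i, v i ^ 2 = 1) (i : ι) : |v i| ≤ 1 := by
  rw [← sq_le_one_iff_abs_le_one, ← hv]
  exact Finset.single_le_sum (f := fun j => v j ^ 2) (fun j _ => sq_nonneg _) (Finset.mem_univ i)

theorem neg_sum_abs_le_dotProduct_mulVec {ι R : Type*} [Fintype ι] [CommRing R] [LinearOrder R]
    [IsStrictOrderedRing R] (L : Matrix ι ι R) {v : ι → R} (hv : ∀ i, |v i| ≤ 1) :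
    -∑ i, ∑ j, |L i j| ≤ v ⬝ᵥ (L *ᵥ v) := by
  have hterm : ∀ i j, -|L i j| ≤ v i * (L i j * v j) := by
    intro i j
    refine neg_le_of_abs_le ?_
    have hvi := hv i
    have hvj := hv j
    calc |v i * (L i j * v j)| = |v i| * (|L i j| * |v j|) := by rw [abs_mul, abs_mul]
      _ ≤ 1 * (|L i j| * 1) := by gcongr
      _ = |L i j| := by ring
  calc -∑ i, ∑ j, |L i j| = ∑ i, ∑ j, -|L i j| := by simp only [Finset.sum_neg_distrib]
    _ ≤ ∑ i, ∑ j, v i * (L i j * v j) :=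
      Finset.sum_le_sum fun i _ => Finset.sum_le_sum fun j _ => hterm i j
    _ = v ⬝ᵥ (L *ᵥ v) := by simp only [dotProduct, mulVec, Finset.mul_sum]

theorem lambda2_le_dotProduct_mulVec {n : ℕ} (L : Matrix (Fin n) (Fin n) ℝ) {v : Fin n → ℝ}
    (hv : ∑ i, v i ^ 2 = 1) (hv₀ : ∑ i, v i = 0) : lambda2 L ≤ v ⬝ᵥ (L *ᵥ v) := by
  refine csInf_le ⟨-∑ i, ∑ j, |L i j|, ?_⟩ ⟨v, hv, hv₀, rfl⟩
  rintro r ⟨u, hu, -, rfl⟩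
  exact neg_sum_abs_le_dotProduct_mulVec L (abs_le_one_of_sum_sq_eq_one hu)

theorem dotProduct_mulVec_eq_of_mulVec_eq_smul {ι R : Type*} [Fintype ι] [CommRing R]
    {L : Matrix ι ι R} {v : ι → R} {μ : R} (hv : ∑ i, v i ^ 2 = 1) (hμ : L *ᵥ v = μ • v) :
    v ⬝ᵥ (L *ᵥ v) = μ := by
  have hvv : v ⬝ᵥ v = 1 := by simpa only [dotProduct, sq] using hv
  rw [hμ, dotProduct_smul, smul_eq_mul, hvv, mul_one]

theorem csSup_exists_forall_le_eq_of_le_diag {ι α : Type*} [ConditionallyCompleteLinearOrder α]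
    {Γ : Set ι} {f : ι → ι → α} {g : ι → α} (hle : ∀ x ∈ Γ, ∀ y ∈ Γ, g x ≤ f x y)
    (hdiag : ∀ x ∈ Γ, f x x ≤ g x) :
    sSup {γ | ∃ x ∈ Γ, ∀ y ∈ Γ, γ ≤ f x y} = sSup {r | ∃ x ∈ Γ, r = g x} := by
  apply csSup_eq_csSup_of_forall_exists_le
  · rintro γ ⟨x, hx, hγ⟩
    exact ⟨g x, ⟨x, hx, rfl⟩, (hγ x hx).trans (hdiag x hx)⟩
  · rintro r ⟨x, hx, rfl⟩
    exact ⟨g x, ⟨x, hx, hle x hx⟩, le_rfl⟩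

theorem stmt6_general {n : ℕ} (E : Finset (Fin n × Fin n))
    (w : Fin n × Fin n → ℝ)
    (Γ : Finset ((Fin n × Fin n) → ℝ))
    (v : ((Fin n × Fin n) → ℝ) → (Fin n → ℝ))
    (hFiedler : ∀ x ∈ Γ, (∑ i, (v x i)^2) = 1 ∧ (∑ i, v x i) = 0 ∧
      (Lap E w x) *ᵥ (v x) = lambda2 (Lap E w x) • (v x)) :
    sSup {γ : ℝ | ∃ x ∈ Γ, ∀ y ∈ Γ, γ ≤ (v y) ⬝ᵥ ((Lap E w x) *ᵥ (v y))}
      = sSup {r : ℝ | ∃ x ∈ Γ, r = lambda2 (Lap E w x)} :=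
  csSup_exists_forall_le_eq_of_le_diag (Γ := (Γ : Set _))
    (fun _ _ y hy => lambda2_le_dotProduct_mulVec _ (hFiedler y hy).1 (hFiedler y hy).2.1)
    (fun x hx => (dotProduct_mulVec_eq_of_mulVec_eq_smul (hFiedler x hx).1
      (hFiedler x hx).2.2).le)

/-- The Fiedler-vector MILP formulation is exact: relaxing the semidefinite
constraint to the finitely many linear inequalities given by the Fiedler vectors
of all feasible solutions preserves the optimal value `max_{x ∈ Γ} λ₂(L(x))`. -/
theorem stmt6 {n : ℕ} (hn : 0 < n) (E : Finset (Fin n × Fin n))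
    (w : Fin n × Fin n → ℝ)
    (Γ : Finset ((Fin n × Fin n) → ℝ)) (hΓ : Γ.Nonempty)
    (hbin : ∀ x ∈ Γ, ∀ e, x e = 0 ∨ x e = 1)
    (v : ((Fin n × Fin n) → ℝ) → (Fin n → ℝ))
    (hFiedler : ∀ x ∈ Γ, (∑ i, (v x i)^2) = 1 ∧ (∑ i, v x i) = 0 ∧
      (Lap E w x) *ᵥ (v x) = lambda2 (Lap E w x) • (v x)) :
    sSup {γ : ℝ | ∃ x ∈ Γ, ∀ y ∈ Γ, γ ≤ (v y) ⬝ᵥ ((Lap E w x) *ᵥ (v y))}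
      = sSup {r : ℝ | ∃ x ∈ Γ, r = lambda2 (Lap E w x)} :=
  stmt6_general E w Γ v hFiedler
end

section
/- Minimum power placement: let L be a symmetric positive semidefinite n×n matrix with L𝟙 = 0 and eigenvalues 0 = λ₁ ≤ λ₂ ≤ λ₃ ≤ ... Consider the minimization of a·La + b·Lb + c·Lc over vectors a, b, c ∈ ℝⁿ subject to 𝟙·a = 0, 𝟙·b = 0, a·b = 0, a·a ≥ R², b·b ≥ R². The minimum value is R²(λ₂(L) + λ₃(L)) (taking c ∈ span(𝟙)). -/
open Matrix BigOperators

/-- The third smallest eigenvalue, via the Courant–Fischer max-min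
characterization: the supremum over pairs `u₁, u₂` of the infimum of the
quadratic form over unit vectors orthogonal to both. -/
noncomputable def lambda3 {n : ℕ} (L : Matrix (Fin n) (Fin n) ℝ) : ℝ :=
  sSup {r : ℝ | ∃ u₁ u₂ : Fin n → ℝ,
    r = sInf {q : ℝ | ∃ v : Fin n → ℝ, (∑ i, (v i)^2) = 1 ∧
      v ⬝ᵥ u₁ = 0 ∧ v ⬝ᵥ u₂ = 0 ∧ q = v ⬝ᵥ (L *ᵥ v)}}

/-!
On `𝟙ᗮ` the form `Q v = v ⬝ᵥ (L *ᵥ v)` attains its minimum `μ₂` over unit vectors at some `v₂`,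
and on `𝟙ᗮ ∩ v₂ᗮ` its minimum `μ₃` at some `v₃` (compactness of the unit sphere). Then
`lambda2 L = μ₂`, and `lambda3 L = μ₃`: the constraints `u₁ = 𝟙`, `u₂ = v₂` give `μ₃`, while
any two constraints are met by a unit vector of `span {𝟙, v₂, v₃}`, where `Q ≤ μ₃` because these
three vectors are orthogonal for both the dot product and `Q`.

Minimality of `v₂` gives the first-order condition `v₂ ⬝ᵥ (L *ᵥ w) = 0` for `w ∈ 𝟙ᗮ ∩ v₂ᗮ`,
hence `Q w ≥ μ₂ (w ⬝ᵥ v₂)² + μ₃ (‖w‖² - (w ⬝ᵥ v₂)²)` on `𝟙ᗮ`. For orthogonal `a, b ∈ 𝟙ᗮ`,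
Bessel's inequality `(a ⬝ᵥ v₂)² / ‖a‖² + (b ⬝ᵥ v₂)² / ‖b‖² ≤ 1` turns this into
`Q a / ‖a‖² + Q b / ‖b‖² ≥ μ₂ + μ₃`, and `‖a‖², ‖b‖² ≥ R²` gives the lower bound, which
`a = R • v₂`, `b = R • v₃`, `c = 0` attain.
-/

namespace Matrix

variable {ι : Type*} [Fintype ι]

lemma dotProduct_mulVec_comm {L : Matrix ι ι ℝ} (hL : L.IsSymm) (x y : ι → ℝ) :
    x ⬝ᵥ (L *ᵥ y) = y ⬝ᵥ (L *ᵥ x) := by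
  rw [dotProduct_mulVec, ← vecMul_transpose, hL.eq, dotProduct_comm]

lemma PosSemidef.dotProduct_mulVec_self_nonneg {L : Matrix ι ι ℝ} (hL : L.PosSemidef)
    (x : ι → ℝ) : 0 ≤ x ⬝ᵥ (L *ᵥ x) := by
  simpa using hL.dotProduct_mulVec_nonneg x

lemma smul_dotProduct_mulVec_smul (L : Matrix ι ι ℝ) (t : ℝ) (x : ι → ℝ) :
    (t • x) ⬝ᵥ (L *ᵥ (t • x)) = t ^ 2 * (x ⬝ᵥ (L *ᵥ x)) := by
  simp only [mulVec_smul, smul_dotProduct, dotProduct_smul, smul_eq_mul]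
  ring

lemma smul_dotProduct_smul (t : ℝ) (x : ι → ℝ) : (t • x) ⬝ᵥ (t • x) = t ^ 2 * (x ⬝ᵥ x) := by
  simp only [smul_dotProduct, dotProduct_smul, smul_eq_mul]
  ring

lemma sum_sq_eq_dotProduct_self (x : ι → ℝ) : ∑ i, x i ^ 2 = x ⬝ᵥ x := by
  simp only [dotProduct, sq]

lemma dotProduct_self_nonneg (x : ι → ℝ) : 0 ≤ x ⬝ᵥ x := by
  simpa using dotProduct_self_star_nonneg x

lemma dotProduct_self_pos {x : ι → ℝ} (hx : x ≠ 0) : 0 < x ⬝ᵥ x :=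
  (dotProduct_self_nonneg x).lt_of_ne (Ne.symm (dotProduct_self_eq_zero.not.2 hx))

lemma exists_sq_mul_dotProduct_self_eq_one {x : ι → ℝ} (hx : x ≠ 0) :
    ∃ t : ℝ, t ^ 2 * (x ⬝ᵥ x) = 1 :=
  ⟨(Real.sqrt (x ⬝ᵥ x))⁻¹, by
    rw [inv_pow, Real.sq_sqrt (dotProduct_self_pos hx).le,
      inv_mul_cancel₀ (dotProduct_self_pos hx).ne']⟩

lemma isCompact_setOf_dotProduct_self_eq_one : IsCompact {x : ι → ℝ | x ⬝ᵥ x = 1} := by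
  refine Metric.isCompact_of_isClosed_isBounded
    (isClosed_eq (continuous_id.dotProduct continuous_id) continuous_const)
    ((Metric.isBounded_closedBall (x := 0) (r := 1)).subset fun x hx => ?_)
  refine mem_closedBall_zero_iff.2 <| (pi_norm_le_iff_of_nonneg zero_le_one).2 fun i => ?_
  have hi : x i * x i ≤ x ⬝ᵥ x :=
    Finset.single_le_sum (f := fun j => x j * x j) (fun j _ => mul_self_nonneg _)
      (Finset.mem_univ i)
  rw [Real.norm_eq_abs, abs_le_one_iff_mul_self_le_one]
  exact hi.trans_eq hx

lemma sq_div_add_sq_div_le_one {a b v : ι → ℝ} (ha : a ≠ 0) (hb : b ≠ 0) (hab : a ⬝ᵥ b = 0)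
    (hv : v ⬝ᵥ v = 1) :
    (a ⬝ᵥ v) ^ 2 / (a ⬝ᵥ a) + (b ⬝ᵥ v) ^ 2 / (b ⬝ᵥ b) ≤ 1 := by
  have ha' := (dotProduct_self_pos ha).ne'
  have hb' := (dotProduct_self_pos hb).ne'
  set w := v - ((a ⬝ᵥ v) / (a ⬝ᵥ a)) • a - ((b ⬝ᵥ v) / (b ⬝ᵥ b)) • b
  have hw : w ⬝ᵥ w = 1 - (a ⬝ᵥ v) ^ 2 / (a ⬝ᵥ a) - (b ⬝ᵥ v) ^ 2 / (b ⬝ᵥ b) := by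
    simp only [w, sub_dotProduct, dotProduct_sub, smul_dotProduct, dotProduct_smul, smul_eq_mul,
      hv, hab, dotProduct_comm b a, dotProduct_comm v a, dotProduct_comm v b]
    field_simp
    ring
  linarith [hw ▸ dotProduct_self_nonneg w]

lemma sum_smul_dotProduct_mulVec_sum_smul {κ : Type*} [Fintype κ] (M : Matrix ι ι ℝ)
    {e : κ → ι → ℝ} (he : Pairwise fun i j => e i ⬝ᵥ (M *ᵥ e j) = 0) (c : κ → ℝ) :
    (∑ j, c j • e j) ⬝ᵥ (M *ᵥ ∑ j, c j • e j) = ∑ j, c j ^ 2 * (e j ⬝ᵥ (M *ᵥ e j)) := by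
  simp only [mulVec_sum, mulVec_smul, sum_dotProduct, dotProduct_sum, smul_dotProduct,
    dotProduct_smul, smul_eq_mul]
  refine Finset.sum_congr rfl fun i _ => ?_
  rw [Finset.sum_eq_single i (fun j _ hji => by simp [he hji]) (by simp), sq, mul_assoc]

def orthogonalTo {k : ℕ} (u : Fin k → ι → ℝ) : Submodule ℝ (ι → ℝ) :=
  LinearMap.ker (Matrix.of u).mulVecLin

@[simp]
lemma mem_orthogonalTo {k : ℕ} {u : Fin k → ι → ℝ} {x : ι → ℝ} :
    x ∈ orthogonalTo u ↔ ∀ i, x ⬝ᵥ u i = 0 := by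
  simp [orthogonalTo, funext_iff, mulVec, dotProduct_comm]

lemma orthogonalTo_ne_bot {k : ℕ} (u : Fin k → ι → ℝ) (hk : k < Fintype.card ι) :
    orthogonalTo u ≠ ⊥ :=
  LinearMap.ker_ne_bot_of_finrank_lt (by simpa using hk)

lemma mem_orthogonalTo_one {x : ι → ℝ} : x ∈ orthogonalTo ![1] ↔ ∑ i, x i = 0 := by
  simp [dotProduct_one]

lemma mem_orthogonalTo_one_vec {v x : ι → ℝ} :
    x ∈ orthogonalTo ![1, v] ↔ x ∈ orthogonalTo ![1] ∧ x ⬝ᵥ v = 0 := by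
  simp [Fin.forall_fin_two]

lemma exists_mem_orthogonalTo_dotProduct_mulVec_le {κ : Type*} [Fintype κ] {L : Matrix ι ι ℝ}
    {e : κ → ι → ℝ} (he0 : ∀ j, e j ≠ 0) (horth : Pairwise fun i j => e i ⬝ᵥ e j = 0)
    (hLorth : Pairwise fun i j => e i ⬝ᵥ (L *ᵥ e j) = 0) {μ : ℝ}
    (hμ : ∀ j, e j ⬝ᵥ (L *ᵥ e j) ≤ μ * (e j ⬝ᵥ e j)) {k : ℕ} (u : Fin k → ι → ℝ)
    (hk : k < Fintype.card κ) :
    ∃ x ∈ orthogonalTo u, x ⬝ᵥ x = 1 ∧ x ⬝ᵥ (L *ᵥ x) ≤ μ := by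
  classical
  obtain ⟨c, hc, hc0⟩ :=
    Submodule.exists_mem_ne_zero_of_ne_bot (orthogonalTo_ne_bot (fun i j => e j ⬝ᵥ u i) hk)
  set x := ∑ j, c j • e j
  have hxu : x ∈ orthogonalTo u := by
    rw [mem_orthogonalTo] at hc ⊢
    intro i
    simp only [x, sum_dotProduct, smul_dotProduct, smul_eq_mul]
    exact hc i
  have hxx : x ⬝ᵥ x = ∑ j, c j ^ 2 * (e j ⬝ᵥ e j) := by
    simpa using sum_smul_dotProduct_mulVec_sum_smul 1 (e := e) (by simpa using horth) c
  have hx0 : x ≠ 0 := by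
    obtain ⟨j, hj⟩ := Function.ne_iff.1 hc0
    have hpos : 0 < x ⬝ᵥ x := hxx ▸ Finset.sum_pos'
      (fun i _ => mul_nonneg (sq_nonneg _) (dotProduct_self_nonneg (e i)))
      ⟨j, Finset.mem_univ j, mul_pos (sq_pos_of_ne_zero hj) (dotProduct_self_pos (he0 j))⟩
    rintro h
    simp [h] at hpos
  have hxL : x ⬝ᵥ (L *ᵥ x) ≤ μ * (x ⬝ᵥ x) := by
    rw [sum_smul_dotProduct_mulVec_sum_smul L hLorth, hxx, Finset.mul_sum]
    exact Finset.sum_le_sum fun j _ => by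
      nlinarith [mul_le_mul_of_nonneg_left (hμ j) (sq_nonneg (c j))]
  obtain ⟨t, ht⟩ := exists_sq_mul_dotProduct_self_eq_one hx0
  refine ⟨t • x, (orthogonalTo u).smul_mem t hxu, (smul_dotProduct_smul t x).trans ht, ?_⟩
  rw [smul_dotProduct_mulVec_smul]
  calc t ^ 2 * (x ⬝ᵥ (L *ᵥ x)) ≤ t ^ 2 * (μ * (x ⬝ᵥ x)) :=
        mul_le_mul_of_nonneg_left hxL (sq_nonneg t)
    _ = μ := by linear_combination μ * ht

structure IsUnitMinimizer (L : Matrix ι ι ℝ) (S : Submodule ℝ (ι → ℝ)) (v : ι → ℝ) : Prop where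
  mem : v ∈ S
  dotProduct_self : v ⬝ᵥ v = 1
  le : ∀ w ∈ S, w ⬝ᵥ w = 1 → v ⬝ᵥ (L *ᵥ v) ≤ w ⬝ᵥ (L *ᵥ w)

lemma exists_isUnitMinimizer (L : Matrix ι ι ℝ) {S : Submodule ℝ (ι → ℝ)} (hS : S ≠ ⊥) :
    ∃ v, IsUnitMinimizer L S v := by
  obtain ⟨w, hwS, hw⟩ := Submodule.exists_mem_ne_zero_of_ne_bot hS
  obtain ⟨t, ht⟩ := exists_sq_mul_dotProduct_self_eq_one hw
  have hK : IsCompact ((S : Set (ι → ℝ)) ∩ {x : ι → ℝ | x ⬝ᵥ x = 1}) :=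
    isCompact_setOf_dotProduct_self_eq_one.inter_left S.closed_of_finiteDimensional
  obtain ⟨v, ⟨hvS, hv⟩, hmin⟩ := hK.exists_isMinOn
    ⟨t • w, S.smul_mem t hwS, (smul_dotProduct_smul t w).trans ht⟩
    (continuous_id.dotProduct (continuous_const.matrix_mulVec continuous_id)).continuousOn
  exact ⟨v, hvS, hv, fun w hwS hw => hmin ⟨hwS, hw⟩⟩

namespace IsUnitMinimizer

variable {L : Matrix ι ι ℝ} {S : Submodule ℝ (ι → ℝ)} {v : ι → ℝ}

lemma ne_zero (h : IsUnitMinimizer L S v) : v ≠ 0 := by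
  rintro rfl
  simpa using h.dotProduct_self

lemma mul_dotProduct_self_le (h : IsUnitMinimizer L S v) {w : ι → ℝ} (hw : w ∈ S) :
    v ⬝ᵥ (L *ᵥ v) * (w ⬝ᵥ w) ≤ w ⬝ᵥ (L *ᵥ w) := by
  rcases eq_or_ne w 0 with rfl | hw0
  · simp
  obtain ⟨t, ht⟩ := exists_sq_mul_dotProduct_self_eq_one hw0
  have hmin := h.le (t • w) (S.smul_mem t hw) ((smul_dotProduct_smul t w).trans ht)
  rw [smul_dotProduct_mulVec_smul] at hmin
  calc v ⬝ᵥ (L *ᵥ v) * (w ⬝ᵥ w) ≤ t ^ 2 * (w ⬝ᵥ (L *ᵥ w)) * (w ⬝ᵥ w) :=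
        mul_le_mul_of_nonneg_right hmin (dotProduct_self_nonneg w)
    _ = w ⬝ᵥ (L *ᵥ w) := by linear_combination (w ⬝ᵥ (L *ᵥ w)) * ht

lemma dotProduct_mulVec_eq_zero (hL : L.IsSymm) (h : IsUnitMinimizer L S v) {w : ι → ℝ}
    (hw : w ∈ S) (hwv : w ⬝ᵥ v = 0) : v ⬝ᵥ (L *ᵥ w) = 0 := by
  -- `Q (v + t • w) - μ ‖v + t • w‖²` is a nonnegative quadratic in `t` vanishing at `t = 0`.
  have hquad : ∀ t : ℝ, 0 ≤ (w ⬝ᵥ (L *ᵥ w) - v ⬝ᵥ (L *ᵥ v) * (w ⬝ᵥ w)) * (t * t)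
      + 2 * (v ⬝ᵥ (L *ᵥ w)) * t + 0 := by
    intro t
    have hle := h.mul_dotProduct_self_le (S.add_mem h.mem (S.smul_mem t hw))
    have hvw : v ⬝ᵥ w = 0 := by rw [dotProduct_comm, hwv]
    simp only [mulVec_add, mulVec_smul, dotProduct_add, add_dotProduct, dotProduct_smul,
      smul_dotProduct, smul_eq_mul, hwv, hvw, h.dotProduct_self, dotProduct_mulVec_comm hL w v]
      at hle
    linarith
  have hdisc := discrim_le_zero hquad
  simp only [discrim, mul_zero, sub_zero] at hdisc
  nlinarith [sq_nonneg (v ⬝ᵥ (L *ᵥ w))]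

variable {μ' : ℝ}

lemma add_mul_le_dotProduct_mulVec (hL : L.IsSymm) (h : IsUnitMinimizer L S v)
    (h' : ∀ u ∈ S, u ⬝ᵥ v = 0 → μ' * (u ⬝ᵥ u) ≤ u ⬝ᵥ (L *ᵥ u)) {w : ι → ℝ} (hw : w ∈ S) :
    v ⬝ᵥ (L *ᵥ v) * (w ⬝ᵥ v) ^ 2 + μ' * (w ⬝ᵥ w - (w ⬝ᵥ v) ^ 2) ≤ w ⬝ᵥ (L *ᵥ w) := by
  set p := w ⬝ᵥ v
  set u := w - p • v
  have hu : u ∈ S := S.sub_mem hw (S.smul_mem p h.mem)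
  have huv : u ⬝ᵥ v = 0 := by
    simp only [u, sub_dotProduct, smul_dotProduct, h.dotProduct_self, smul_eq_mul, mul_one]
    exact sub_self p
  have hvLu := h.dotProduct_mulVec_eq_zero hL hu huv
  have hw_eq : w = u + p • v := by simp [u]
  have huu : u ⬝ᵥ u = w ⬝ᵥ w - p ^ 2 := by
    simp only [u, sub_dotProduct, dotProduct_sub, smul_dotProduct, dotProduct_smul, smul_eq_mul,
      h.dotProduct_self, dotProduct_comm v w]
    ring
  have hQ : w ⬝ᵥ (L *ᵥ w) = u ⬝ᵥ (L *ᵥ u) + p ^ 2 * (v ⬝ᵥ (L *ᵥ v)) := by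
    conv_lhs => rw [hw_eq]
    simp only [mulVec_add, mulVec_smul, dotProduct_add, add_dotProduct, dotProduct_smul,
      smul_dotProduct, smul_eq_mul, hvLu, dotProduct_mulVec_comm hL u v]
    ring
  linarith [huu ▸ h' u hu huv]

lemma add_le_div_add_div (hL : L.IsSymm) (h : IsUnitMinimizer L S v) (hμ : v ⬝ᵥ (L *ᵥ v) ≤ μ')
    (h' : ∀ u ∈ S, u ⬝ᵥ v = 0 → μ' * (u ⬝ᵥ u) ≤ u ⬝ᵥ (L *ᵥ u)) {a b : ι → ℝ}
    (ha : a ∈ S) (hb : b ∈ S) (ha0 : a ≠ 0) (hb0 : b ≠ 0) (hab : a ⬝ᵥ b = 0) :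
    v ⬝ᵥ (L *ᵥ v) + μ' ≤ a ⬝ᵥ (L *ᵥ a) / (a ⬝ᵥ a) + b ⬝ᵥ (L *ᵥ b) / (b ⬝ᵥ b) := by
  set μ := v ⬝ᵥ (L *ᵥ v)
  have hquot : ∀ x ∈ S, x ≠ 0 →
      μ' - (μ' - μ) * ((x ⬝ᵥ v) ^ 2 / (x ⬝ᵥ x)) ≤ x ⬝ᵥ (L *ᵥ x) / (x ⬝ᵥ x) := by
    intro x hx hx0
    rw [le_div_iff₀ (dotProduct_self_pos hx0)]
    calc _ = μ * (x ⬝ᵥ v) ^ 2 + μ' * (x ⬝ᵥ x - (x ⬝ᵥ v) ^ 2) := by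
          field_simp [(dotProduct_self_pos hx0).ne']
          ring
      _ ≤ _ := h.add_mul_le_dotProduct_mulVec hL h' hx
  have hbessel := sq_div_add_sq_div_le_one ha0 hb0 hab h.dotProduct_self
  linarith [hquot a ha ha0, hquot b hb hb0, mul_nonneg (sub_nonneg.2 hμ) (sub_nonneg.2 hbessel)]

lemma sq_mul_add_le (hL : L.IsSymm) (hpsd : L.PosSemidef) (h : IsUnitMinimizer L S v)
    (hμ : v ⬝ᵥ (L *ᵥ v) ≤ μ') (h' : ∀ u ∈ S, u ⬝ᵥ v = 0 → μ' * (u ⬝ᵥ u) ≤ u ⬝ᵥ (L *ᵥ u))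
    {R : ℝ} (hR : 0 < R) {a b : ι → ℝ} (ha : a ∈ S) (hb : b ∈ S) (hab : a ⬝ᵥ b = 0)
    (hRa : R ^ 2 ≤ a ⬝ᵥ a) (hRb : R ^ 2 ≤ b ⬝ᵥ b) :
    R ^ 2 * (v ⬝ᵥ (L *ᵥ v) + μ') ≤ a ⬝ᵥ (L *ᵥ a) + b ⬝ᵥ (L *ᵥ b) := by
  have hscale : ∀ x : ι → ℝ, R ^ 2 ≤ x ⬝ᵥ x →
      R ^ 2 * (x ⬝ᵥ (L *ᵥ x) / (x ⬝ᵥ x)) ≤ x ⬝ᵥ (L *ᵥ x) := by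
    intro x hx
    have hpos : 0 < x ⬝ᵥ x := (pow_pos hR 2).trans_le hx
    calc _ ≤ x ⬝ᵥ x * (x ⬝ᵥ (L *ᵥ x) / (x ⬝ᵥ x)) :=
          mul_le_mul_of_nonneg_right hx (div_nonneg (hpsd.dotProduct_mulVec_self_nonneg x) hpos.le)
      _ = _ := mul_div_cancel₀ _ hpos.ne'
  have hne : ∀ x : ι → ℝ, R ^ 2 ≤ x ⬝ᵥ x → x ≠ 0 := by
    rintro x hx rfl
    exact (pow_pos hR 2).not_ge (by simpa using hx)
  calc _ ≤ R ^ 2 * (a ⬝ᵥ (L *ᵥ a) / (a ⬝ᵥ a) + b ⬝ᵥ (L *ᵥ b) / (b ⬝ᵥ b)) :=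
        mul_le_mul_of_nonneg_left
          (h.add_le_div_add_div hL hμ h' ha hb (hne a hRa) (hne b hRb) hab) (sq_nonneg R)
    _ ≤ _ := by rw [mul_add]; exact add_le_add (hscale a hRa) (hscale b hRb)

end IsUnitMinimizer

end Matrix

lemma lambda2_eq {n : ℕ} {L : Matrix (Fin n) (Fin n) ℝ} {v : Fin n → ℝ}
    (h : IsUnitMinimizer L (orthogonalTo ![1]) v) : lambda2 L = v ⬝ᵥ (L *ᵥ v) := by
  refine IsLeast.csInf_eq ⟨⟨v, ?_, mem_orthogonalTo_one.1 h.mem, rfl⟩, ?_⟩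
  · rw [sum_sq_eq_dotProduct_self, h.dotProduct_self]
  · rintro r ⟨w, hw, hw0, rfl⟩
    exact h.le w (mem_orthogonalTo_one.2 hw0) (by rwa [← sum_sq_eq_dotProduct_self])

lemma lambda3_eq {n : ℕ} (hn : 3 ≤ n) {L : Matrix (Fin n) (Fin n) ℝ} (hL : L.IsSymm)
    (hpsd : L.PosSemidef) (hker : L *ᵥ 1 = 0) {v₂ v₃ : Fin n → ℝ}
    (h₂ : IsUnitMinimizer L (orthogonalTo ![1]) v₂)
    (h₃ : IsUnitMinimizer L (orthogonalTo ![1, v₂]) v₃) :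
    lambda3 L = v₃ ⬝ᵥ (L *ᵥ v₃) := by
  have hmem₃ : ∀ w, w ∈ orthogonalTo ![1, v₂] ↔ w ⬝ᵥ 1 = 0 ∧ w ⬝ᵥ v₂ = 0 := by
    simp [Fin.forall_fin_two]
  have hv₂1 : v₂ ⬝ᵥ 1 = 0 := by simpa using h₂.mem
  obtain ⟨hv₃1, hv₃v₂⟩ := (hmem₃ v₃).1 h₃.mem
  apply IsGreatest.csSup_eq
  constructor
  · refine ⟨1, v₂, Eq.symm <| IsLeast.csInf_eq ?_⟩
    refine ⟨⟨v₃, ?_, hv₃1, hv₃v₂, rfl⟩, ?_⟩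
    · rw [sum_sq_eq_dotProduct_self, h₃.dotProduct_self]
    · rintro q ⟨w, hw, hw1, hwv₂, rfl⟩
      exact h₃.le w ((hmem₃ w).2 ⟨hw1, hwv₂⟩) (by rwa [← sum_sq_eq_dotProduct_self])
  · rintro r ⟨u₁, u₂, rfl⟩
    have hv₃ := (mem_orthogonalTo_one_vec.1 h₃.mem).1
    have h1L : ∀ w, (1 : Fin n → ℝ) ⬝ᵥ (L *ᵥ w) = 0 := fun w => by
      rw [dotProduct_mulVec_comm hL, hker, dotProduct_zero]
    have hv₂Lv₃ : v₂ ⬝ᵥ (L *ᵥ v₃) = 0 := h₂.dotProduct_mulVec_eq_zero hL hv₃ hv₃v₂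
    have hv₃Lv₂ : v₃ ⬝ᵥ (L *ᵥ v₂) = 0 := by rw [dotProduct_mulVec_comm hL, hv₂Lv₃]
    have he0 : ∀ j, ![1, v₂, v₃] j ≠ 0 := by
      intro j
      fin_cases j
      · exact fun h => by simpa using congrFun h ⟨0, by omega⟩
      · exact h₂.ne_zero
      · exact h₃.ne_zero
    have horth : Pairwise fun i j => ![1, v₂, v₃] i ⬝ᵥ ![1, v₂, v₃] j = 0 := by
      intro i j hij
      fin_cases i <;> fin_cases j <;>
        simp_all [dotProduct_comm 1 v₂, dotProduct_comm 1 v₃, dotProduct_comm v₂ v₃]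
    have hLorth : Pairwise fun i j => ![1, v₂, v₃] i ⬝ᵥ (L *ᵥ ![1, v₂, v₃] j) = 0 := by
      intro i j hij
      fin_cases i <;> fin_cases j <;> simp_all
    have hle : ∀ j, ![1, v₂, v₃] j ⬝ᵥ (L *ᵥ ![1, v₂, v₃] j) ≤
        v₃ ⬝ᵥ (L *ᵥ v₃) * (![1, v₂, v₃] j ⬝ᵥ ![1, v₂, v₃] j) := by
      intro j
      fin_cases j
      · simpa [h1L] using mul_nonneg (hpsd.dotProduct_mulVec_self_nonneg v₃) n.cast_nonneg
      · simpa [h₂.dotProduct_self] using h₂.le v₃ hv₃ h₃.dotProduct_self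
      · simp [h₃.dotProduct_self]
    obtain ⟨x, hx, hxx, hxL⟩ :=
      exists_mem_orthogonalTo_dotProduct_mulVec_le he0 horth hLorth hle ![u₁, u₂] (by simp)
    refine csInf_le_of_le ⟨0, ?_⟩ ⟨x, ?_, ?_, ?_, rfl⟩ hxL
    · rintro q ⟨w, -, -, -, rfl⟩
      exact hpsd.dotProduct_mulVec_self_nonneg w
    · rw [sum_sq_eq_dotProduct_self, hxx]
    · simpa using mem_orthogonalTo.1 hx 0
    · simpa using mem_orthogonalTo.1 hx 1

theorem stmt12_general {n : ℕ} (hn : 3 ≤ n) (L : Matrix (Fin n) (Fin n) ℝ)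
    (hsymm : L.IsSymm) (hpsd : L.PosSemidef)
    (hker : L *ᵥ (fun _ => (1 : ℝ)) = 0)
    (R : ℝ) (hR : 0 < R) :
    IsLeast {P : ℝ | ∃ a b c : Fin n → ℝ,
        (∑ i, a i) = 0 ∧ (∑ i, b i) = 0 ∧ a ⬝ᵥ b = 0 ∧
        R^2 ≤ a ⬝ᵥ a ∧ R^2 ≤ b ⬝ᵥ b ∧
        P = a ⬝ᵥ (L *ᵥ a) + b ⬝ᵥ (L *ᵥ b) + c ⬝ᵥ (L *ᵥ c)}
      (R^2 * (lambda2 L + lambda3 L)) := by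
  obtain ⟨v₂, h₂⟩ := exists_isUnitMinimizer L (orthogonalTo_ne_bot ![1] (by simp; omega))
  obtain ⟨v₃, h₃⟩ := exists_isUnitMinimizer L (orthogonalTo_ne_bot ![1, v₂] (by simp; omega))
  obtain ⟨hv₃, hv₃v₂⟩ := mem_orthogonalTo_one_vec.1 h₃.mem
  rw [lambda2_eq h₂, lambda3_eq hn hsymm hpsd hker h₂ h₃]
  refine ⟨⟨R • v₂, R • v₃, 0, ?_, ?_, ?_, ?_, ?_, ?_⟩, ?_⟩
  · exact mem_orthogonalTo_one.1 (Submodule.smul_mem _ R h₂.mem)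
  · exact mem_orthogonalTo_one.1 (Submodule.smul_mem _ R hv₃)
  · simp [dotProduct_comm v₂ v₃, hv₃v₂]
  · rw [smul_dotProduct_smul, h₂.dotProduct_self, mul_one]
  · rw [smul_dotProduct_smul, h₃.dotProduct_self, mul_one]
  · simp only [smul_dotProduct_mulVec_smul, mulVec_zero, dotProduct_zero]
    ring
  · rintro P ⟨a, b, c, ha, hb, hab, hRa, hRb, rfl⟩
    have hbound := h₂.sq_mul_add_le hsymm hpsd (h₂.le v₃ hv₃ h₃.dotProduct_self)
      (fun u hu huv => h₃.mul_dotProduct_self_le (mem_orthogonalTo_one_vec.2 ⟨hu, huv⟩)) hR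
      (mem_orthogonalTo_one.2 ha) (mem_orthogonalTo_one.2 hb) hab hRa hRb
    linarith [hpsd.dotProduct_mulVec_self_nonneg c]

/-- Minimum power placement: the minimum of `a·La + b·Lb + c·Lc` over
`𝟙·a = 0`, `𝟙·b = 0`, `a·b = 0`, `a·a ≥ R²`, `b·b ≥ R²` equals
`R²(λ₂(L) + λ₃(L))`. -/
theorem stmt12 {n : ℕ} (hn : 3 ≤ n) (L : Matrix (Fin n) (Fin n) ℝ)
    (hsymm : L.IsSymm) (hpsd : L.PosSemidef)
    (hker : L *ᵥ (fun _ => (1 : ℝ)) = 0)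
    (hconn : 0 < lambda2 L) (R : ℝ) (hR : 0 < R) :
    IsLeast {P : ℝ | ∃ a b c : Fin n → ℝ,
        (∑ i, a i) = 0 ∧ (∑ i, b i) = 0 ∧ a ⬝ᵥ b = 0 ∧
        R^2 ≤ a ⬝ᵥ a ∧ R^2 ≤ b ⬝ᵥ b ∧
        P = a ⬝ᵥ (L *ᵥ a) + b ⬝ᵥ (L *ᵥ b) + c ⬝ᵥ (L *ᵥ c)}
      (R^2 * (lambda2 L + lambda3 L)) :=
  stmt12_general hn L hsymm hpsd hker R hR
end
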